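/- (The reuse-distance histogram does not determine the reuse-time histogram) There exist two address-independent traces of the same length n over the same number m of data items that have identical reuse-distance histograms but different reuse-time histograms. (For example the two length-13 traces over 4 items a = (1,2,3,4,3,4,1,2,3,4,3,2,1) and a' = (1,2,3,4,3,4,2,1,3,4,3,2,1).) -/
import Mathlib


open Finset

/-- The data set of a trace `a` of length `n` (indices 1..n). -/
def dataSet (a : ℕ → ℕ) (n : ℕ) : Finset ℕ := (Finset.Icc 1 n).image a

/-- A trace is address-independent: data items are numbered in order of first appearance. -/
def isAI (a : ℕ → ℕ) (n : ℕ) : Prop :=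
  ∀ t ∈ Finset.Icc 1 n, 1 ≤ a t ∧ a t ≤ 1 + ((Finset.Ico 1 t).image a).card

/-- Indices `s < t` (with `s ≥ 1`) accessing the same datum as `t`. -/
def prevSet (a : ℕ → ℕ) (t : ℕ) : Finset ℕ :=
  (Finset.Ico 1 t).filter (fun s => a s = a t)

/-- Reuse time of access `t`: `t - s*` where `s*` is the previous access to the same
datum, or `⊤` for a first access. -/
def reuseTime (a : ℕ → ℕ) (t : ℕ) : ℕ∞ :=
  if h : (prevSet a t).Nonempty then ((t - (prevSet a t).max' h : ℕ) : ℕ∞) else ⊤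

/-- Reuse distance of access `t`: the number of distinct data accessed in
`a(s*+1), …, a(t)` where `s*` is the previous access to the same datum,
or `⊤` for a first access. -/
def reuseDist (a : ℕ → ℕ) (t : ℕ) : ℕ∞ :=
  if h : (prevSet a t).Nonempty then
    ((((Finset.Icc ((prevSet a t).max' h + 1) t).image a).card : ℕ) : ℕ∞)
  else ⊤

/-- Reuse-time histogram: number of accesses whose reuse time equals `i`. -/
def rtHist (a : ℕ → ℕ) (n i : ℕ) : ℕ :=
  ((Finset.Icc 1 n).filter (fun t => reuseTime a t = (i : ℕ∞))).card

/-- Reuse-distance histogram: number of accesses whose reuse distance equals `v`. -/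
def rdHist (a : ℕ → ℕ) (n v : ℕ) : ℕ :=
  ((Finset.Icc 1 n).filter (fun t => reuseDist a t = (v : ℕ∞))).card

/-- First access time of datum `e`. -/
noncomputable def firstAcc (a : ℕ → ℕ) (n e : ℕ) : ℕ :=
  sInf {t | t ∈ Finset.Icc 1 n ∧ a t = e}

/-- Last access time of datum `e`. -/
noncomputable def lastAcc (a : ℕ → ℕ) (n e : ℕ) : ℕ :=
  sSup {t | t ∈ Finset.Icc 1 n ∧ a t = e}

/-- The sorted list of access times of datum `e` in the trace. -/
def occList (a : ℕ → ℕ) (n e : ℕ) : List ℕ :=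
  ((Finset.Icc 1 n).filter (fun t => a t = e)).sort (· ≤ ·)

/-- Working-set size `ω(t,x)`: distinct data accessed in the window `a(t-x+1), …, a(t)`. -/
def wss (a : ℕ → ℕ) (t x : ℕ) : ℕ := ((Finset.Icc (t - x + 1) t).image a).card

/-- Footprint: the average working-set size over all length-`x` windows. -/
def fp (a : ℕ → ℕ) (n x : ℕ) : ℚ :=
  (∑ t ∈ Finset.Icc x n, (wss a t x : ℚ)) / ((n : ℚ) - (x : ℚ) + 1)

/-- Total working-set size `W(x) = Σ_{t=x}^{n} ω(t,x)`, with `W(0) = 0`. -/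
def totalW (a : ℕ → ℕ) (n x : ℕ) : ℤ :=
  if x = 0 then 0 else ∑ t ∈ Finset.Icc x n, (wss a t x : ℤ)

/-- Steady-state footprint `ss-fp(x) = m - (1/n) Σ_{i=x+1}^{n-1} (i-x)·rt(i)`. -/
def ssfp (a : ℕ → ℕ) (n x : ℕ) : ℚ :=
  ((dataSet a n).card : ℚ)
    - (1 / (n : ℚ)) * ∑ i ∈ Finset.Icc (x + 1) (n - 1), ((i : ℚ) - (x : ℚ)) * (rtHist a n i : ℚ)

def trA : ℕ → ℕ := fun t => [0,1,2,3,4,3,4,1,2,3,4,3,2,1].getD t 0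
def trB : ℕ → ℕ := fun t => [0,1,2,3,4,3,4,2,1,3,4,3,2,1].getD t 0

lemma rdHist_big (a : ℕ → ℕ) (v : ℕ) (hv : 13 < v) : rdHist a 13 v = 0 := by
  rw [rdHist, Finset.card_eq_zero, Finset.filter_eq_empty_iff]
  intro t ht h
  rw [reuseDist] at h
  split at h
  · next hne =>
    have hle : (((Finset.Icc ((prevSet a t).max' hne + 1) t).image a).card) ≤ 13 := by
      calc _ ≤ (Finset.Icc ((prevSet a t).max' hne + 1) t).card := Finset.card_image_le
        _ ≤ t := by rw [Nat.card_Icc]; omega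
        _ ≤ 13 := by simp [Finset.mem_Icc] at ht; omega
    have := (Nat.cast_inj (R := ℕ∞)).mp h
    omega
  · exact (by simp : (⊤ : ℕ∞) ≠ (v:ℕ∞)) h

/-- The reuse-distance histogram does not determine the reuse-time histogram. -/
theorem rd_hist_does_not_determine_rt_hist :
    ∃ (n m : ℕ) (a a' : ℕ → ℕ),
      isAI a n ∧ isAI a' n ∧
      (dataSet a n).card = m ∧ (dataSet a' n).card = m ∧
      (∀ v : ℕ, 1 ≤ v → rdHist a n v = rdHist a' n v) ∧
      (∃ i : ℕ, 1 ≤ i ∧ rtHist a n i ≠ rtHist a' n i) := by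
  refine ⟨13, 4, trA, trB, by rw [isAI]; decide, by rw [isAI]; decide, by decide, by decide, ?_, 7, by norm_num, by decide⟩
  intro v hv
  by_cases h : v ≤ 13
  · interval_cases v <;> decide
  · rw [rdHist_big, rdHist_big] <;> omega
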